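/- Let c > 0 and α > 0, and let P : [0, ∞) → [0, ∞) be differentiable on (0, ∞) with P'(z) ≥ 0 for all z > 0 and P(z) ≥ c z^α for all z ≥ 0. Then there exists a constant C > 0, depending only on c and α, such that for all 3×3 real matrices U and V, (P(|U|)U − P(|V|)V) : (U − V) ≥ C |U − V|^{2+α}; that is, P satisfies the strengthened monotonicity condition (P6) of the paper with exponent q = 2 + α. -/

import Mathlib

/-- Frobenius inner product `A : B = Σ_{i,j} A_{ij} B_{ij}` of `3×3` real matrices. -/
noncomputable def fip (A B : Matrix (Fin 3) (Fin 3) ℝ) : ℝ := ∑ i, ∑ j, A i j * B i j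

/-- Frobenius norm `|A| = (A : A)^{1/2}` of a `3×3` real matrix. -/
noncomputable def fnorm (A : Matrix (Fin 3) (Fin 3) ℝ) : ℝ := Real.sqrt (fip A A)

lemma fip_self_nonneg (A : Matrix (Fin 3) (Fin 3) ℝ) : 0 ≤ fip A A :=
  Finset.sum_nonneg fun _ _ => Finset.sum_nonneg fun _ _ => mul_self_nonneg _

lemma fnorm_nonneg' (A : Matrix (Fin 3) (Fin 3) ℝ) : 0 ≤ fnorm A := Real.sqrt_nonneg _

lemma fnorm_sq (A : Matrix (Fin 3) (Fin 3) ℝ) : fnorm A ^ 2 = fip A A :=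
  Real.sq_sqrt (fip_self_nonneg A)

lemma fip_expand (x y : ℝ) (U V : Matrix (Fin 3) (Fin 3) ℝ) :
    fip (x • U - y • V) (U - V)
      = (x + y) / 2 * fip (U - V) (U - V) + (x - y) / 2 * (fip U U - fip V V) := by
  simp [fip, Fin.sum_univ_three, Matrix.sub_apply, Matrix.smul_apply, smul_eq_mul]
  ring

lemma fip_sub_le (U V : Matrix (Fin 3) (Fin 3) ℝ) :
    fip (U - V) (U - V) ≤ 2 * (fip U U + fip V V) := by
  have h1 : fip (U - V) (U - V) + fip (U + V) (U + V) = 2 * (fip U U + fip V V) := by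
    simp [fip, Fin.sum_univ_three, Matrix.sub_apply, Matrix.add_apply]
    ring
  linarith [fip_self_nonneg (U + V)]

lemma fip_self_eq_zero {V : Matrix (Fin 3) (Fin 3) ℝ} (h : fip V V = 0) : V = 0 := by
  have h' : ∑ p : Fin 3 × Fin 3, (V p.1 p.2) ^ 2 = 0 := by
    rw [Fintype.sum_prod_type]; simpa [fip, sq] using h
  ext i j
  have := (Finset.sum_eq_zero_iff_of_nonneg (fun p _ => sq_nonneg (V p.1 p.2))).1 h'
    (i, j) (Finset.mem_univ _)
  simpa using sq_eq_zero_iff.mp this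

lemma key (c α : ℝ) (hc : 0 < c) (hα : 0 < α) (P : ℝ → ℝ)
    (hP0 : ∀ z : ℝ, 0 ≤ z → 0 ≤ P z)
    (hmono : ∀ a b : ℝ, 0 < b → b ≤ a → P b ≤ P a)
    (hlow : ∀ z : ℝ, 0 ≤ z → c * z ^ α ≤ P z)
    (U V : Matrix (Fin 3) (Fin 3) ℝ) (hab : fnorm V ≤ fnorm U) :
    c / 2 ^ (1 + α) * fnorm (U - V) ^ (2 + α) ≤
      fip (P (fnorm U) • U - P (fnorm V) • V) (U - V) := by
  have h2pow : (0:ℝ) < 2 ^ (1 + α) := Real.rpow_pos_of_pos two_pos _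
  have h2pow1 : (1:ℝ) ≤ 2 ^ (1 + α) := Real.one_le_rpow one_le_two (by positivity)
  by_cases hb0 : fnorm V = 0
  · -- V = 0
    have hfipV : fip V V = 0 := by rw [← fnorm_sq, hb0]; ring
    have hV : V = 0 := fip_self_eq_zero hfipV
    subst hV
    rw [sub_zero, smul_zero, sub_zero]
    have hfip : fip (P (fnorm U) • U) U = P (fnorm U) * fip U U := by
      simp [fip, Fin.sum_univ_three, Matrix.smul_apply, smul_eq_mul]; ring
    rw [hfip, ← fnorm_sq]
    set a := fnorm U with hadef
    have ha : 0 ≤ a := fnorm_nonneg' U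
    rcases eq_or_lt_of_le ha with h0 | h0
    · rw [← h0]
      simp [Real.zero_rpow (by positivity : (2:ℝ) + α ≠ 0)]
    · have hx : c * a ^ α ≤ P a := hlow a ha
      have hrw : a ^ ((2:ℝ) + α) = a ^ 2 * a ^ α := by
        rw [Real.rpow_add h0, Real.rpow_two]
      rw [hrw]
      have h3 : c / 2 ^ (1 + α) ≤ c := div_le_self hc.le h2pow1
      have h4 := mul_le_mul_of_nonneg_right hx (sq_nonneg a)
      have h5 := mul_le_mul_of_nonneg_right h3 (by positivity : (0:ℝ) ≤ a ^ 2 * a ^ α)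
      nlinarith
  · -- fnorm V > 0
    have hb : 0 < fnorm V := lt_of_le_of_ne (fnorm_nonneg' V) (Ne.symm hb0)
    rw [fip_expand, ← fnorm_sq, ← fnorm_sq, ← fnorm_sq]
    set a := fnorm U with hadef
    set b := fnorm V with hbdef
    set d := fnorm (U - V) with hddef
    have ha : 0 < a := lt_of_lt_of_le hb hab
    have hd0 : 0 ≤ d := fnorm_nonneg' _
    have hxy : P b ≤ P a := hmono a b hb hab
    have hx : c * a ^ α ≤ P a := hlow a ha.le
    have hy : 0 ≤ P b := hP0 b hb.le
    have hd2 : d ^ 2 ≤ 2 * (a ^ 2 + b ^ 2) := by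
      rw [fnorm_sq, fnorm_sq, fnorm_sq]; exact fip_sub_le U V
    have hd2a : d ≤ 2 * a := by nlinarith
    have hterm2 : 0 ≤ (P a - P b) / 2 * (a ^ 2 - b ^ 2) := by
      apply mul_nonneg (by linarith)
      nlinarith
    rcases eq_or_lt_of_le hd0 with hd | hd
    · rw [← hd]
      simp [Real.zero_rpow (by positivity : (2:ℝ) + α ≠ 0)]
      nlinarith
    · have hda : c * (d / 2) ^ α ≤ P a := by
        refine le_trans ?_ hx
        have := Real.rpow_le_rpow (by positivity : (0:ℝ) ≤ d / 2) (by linarith : d / 2 ≤ a) hα.le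
        nlinarith [Real.rpow_nonneg (by positivity : (0:ℝ) ≤ d/2) α]
      have hrw : d ^ ((2:ℝ) + α) = d ^ 2 * d ^ α := by
        rw [Real.rpow_add hd, Real.rpow_two]
      have hrw2 : (d / 2) ^ α = d ^ α / 2 ^ α := Real.div_rpow hd0 (by norm_num : (0:ℝ) ≤ 2) α
      have hrw3 : (2:ℝ) ^ (1 + α) = 2 * 2 ^ α := by
        rw [Real.rpow_add two_pos, Real.rpow_one]
      rw [hrw, hrw3]
      rw [hrw2] at hda
      have h2a : (0:ℝ) < 2 ^ α := Real.rpow_pos_of_pos two_pos _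
      have hdα : 0 ≤ d ^ α := Real.rpow_nonneg hd0 α
      have h6 := mul_le_mul_of_nonneg_right hda (by positivity : (0:ℝ) ≤ d ^ 2 / 2)
      have key : c / (2 * 2 ^ α) * (d ^ 2 * d ^ α) = (c * (d ^ α / 2 ^ α)) * (d ^ 2 / 2) := by
        field_simp
      nlinarith [sq_nonneg d]

/-- Let `c > 0`, `α > 0`, and let `P : [0, ∞) → [0, ∞)` be differentiable on `(0, ∞)`
with `P' ≥ 0` and `P(z) ≥ c z^α` for all `z ≥ 0`. Then there is `C > 0` (depending
only on `c` and `α`) such that for all `3×3` real matrices `U`, `V`,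
`(P(|U|)U − P(|V|)V) : (U − V) ≥ C |U − V|^{2+α}`; i.e. `P` satisfies condition (P6)
with exponent `q = 2 + α`. -/
theorem stmt14 (c α : ℝ) (hc : 0 < c) (hα : 0 < α) :
    ∃ C > 0, ∀ P : ℝ → ℝ,
      (∀ z : ℝ, 0 ≤ z → 0 ≤ P z) →
      (∀ z : ℝ, 0 < z → DifferentiableAt ℝ P z) →
      (∀ z : ℝ, 0 < z → 0 ≤ deriv P z) →
      (∀ z : ℝ, 0 ≤ z → c * z ^ α ≤ P z) →
      ∀ U V : Matrix (Fin 3) (Fin 3) ℝ,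
        C * fnorm (U - V) ^ (2 + α) ≤
          fip (P (fnorm U) • U - P (fnorm V) • V) (U - V) := by
  refine ⟨c / 2 ^ (1 + α), by positivity, ?_⟩
  intro P hP0 hdiff hderiv hlow U V
  have hmono : ∀ a b : ℝ, 0 < b → b ≤ a → P b ≤ P a := by
    intro a b hb hba
    have hM : MonotoneOn P (Set.Ioi (0:ℝ)) := by
      apply monotoneOn_of_deriv_nonneg (convex_Ioi 0)
      · intro z hz; exact (hdiff z hz).continuousAt.continuousWithinAt
      · intro z hz; rw [interior_Ioi] at hz; exact (hdiff z hz).differentiableWithinAt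
      · intro z hz; rw [interior_Ioi] at hz; exact hderiv z hz
    exact hM (Set.mem_Ioi.2 hb) (Set.mem_Ioi.2 (lt_of_lt_of_le hb hba)) hba
  rcases le_total (fnorm V) (fnorm U) with h | h
  · exact key c α hc hα P hP0 hmono hlow U V h
  · have h1 : fnorm (U - V) = fnorm (V - U) := by
      unfold fnorm; congr 1
      simp [fip, Fin.sum_univ_three, Matrix.sub_apply]; ring
    have h2 : fip (P (fnorm U) • U - P (fnorm V) • V) (U - V)
        = fip (P (fnorm V) • V - P (fnorm U) • U) (V - U) := by
      simp [fip, Fin.sum_univ_three, Matrix.sub_apply, Matrix.smul_apply, smul_eq_mul]; ring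
    rw [h1, h2]
    exact key c α hc hα P hP0 hmono hlow V U h
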